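/- Let A, B, C be finite dimensional algebras over a field k, let M be a finite dimensional A-B-bimodule and N a finite dimensional B-C-bimodule. Then M* ⊠_{B*} N* ≅ (M ⊗_B N)* as A*-C*-bicomodules, where ⊠_{B*} denotes the cotensor product over the dual coalgebra B*, and the isomorphism sends f ⊗_k g ∈ M* ⊠_{B*} N* to the functional f ⊗_{B*} g on M ⊗_B N. -/

import Mathlib

/-!
STATEMENT 6.  Let `A`, `B`, `C` be finite dimensional algebras over a field `k`,
`M` a finite dimensional `A`-`B`-bimodule and `N` a finite dimensional
`B`-`C`-bimodule.  Then `M* ⊠_{B*} N* ≅ (M ⊗_B N)*` as `A*`-`C*`-bicomodules, the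
isomorphism sending `f ⊗ g` to the functional `f ⊗_{B*} g` on `M ⊗_B N`.

Here `M ⊗_B N` is the balanced tensor product ((M ⊗[k] N) modulo `m·b ⊗ n - m ⊗ b·n`),
and the cotensor product `M* ⊠_{B*} N*` is the kernel of
`(δ⁺_{M*} ⊗ id) - (id ⊗ δ⁻_{N*}) : M* ⊗ N* → M* ⊗ B* ⊗ N*`, where `δ⁺_{M*}`, `δ⁻_{N*}`
are the comodule structures dual to the `B`-actions.  The bicomodule-morphism property
is expressed by duality against the `A`- and `C`-actions.
-/

open TensorProduct MulOpposite

noncomputable section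

namespace LQTPaper

variable (k : Type*) [Field k]

def act (H M : Type*) [Ring H] [Algebra k H] [AddCommGroup M] [Module k M]
    [Module H M] [IsScalarTower k H M] : H →ₗ[k] M →ₗ[k] M :=
  (Algebra.lsmul k k M : H →ₐ[k] Module.End k M).toLinearMap

variable {A B C : Type*} [Ring A] [Algebra k A] [FiniteDimensional k A]
  [Ring B] [Algebra k B] [FiniteDimensional k B]
  [Ring C] [Algebra k C] [FiniteDimensional k C]

variable {M : Type*} [AddCommGroup M] [Module k M] [FiniteDimensional k M]
  [Module A M] [IsScalarTower k A M] [Module Bᵐᵒᵖ M] [IsScalarTower k Bᵐᵒᵖ M]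
  [SMulCommClass A Bᵐᵒᵖ M]

variable {N : Type*} [AddCommGroup N] [Module k N] [FiniteDimensional k N]
  [Module B N] [IsScalarTower k B N] [Module Cᵐᵒᵖ N] [IsScalarTower k Cᵐᵒᵖ N]
  [SMulCommClass B Cᵐᵒᵖ N]

/-- The right `B`-action on `M`, as a map `M ⊗ B → M`. -/
def rAct : M ⊗[k] B →ₗ[k] M :=
  (TensorProduct.lift (act k Bᵐᵒᵖ M)).comp
    ((TensorProduct.comm k M Bᵐᵒᵖ).toLinearMap.comp
      (TensorProduct.map LinearMap.id (opLinearEquiv k).toLinearMap))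

/-- The left `B`-action on `N`, as a map `B ⊗ N → N`. -/
def lAct : B ⊗[k] N →ₗ[k] N := TensorProduct.lift (act k B N)

/-- The right `B*`-comodule structure on `M*`, dual to the right `B`-action on `M`. -/
def coactR : Module.Dual k M →ₗ[k] Module.Dual k M ⊗[k] Module.Dual k B :=
  (TensorProduct.dualDistribEquiv k M B).symm.toLinearMap.comp (rAct k).dualMap

/-- The left `B*`-comodule structure on `N*`, dual to the left `B`-action on `N`. -/
def coactL : Module.Dual k N →ₗ[k] Module.Dual k B ⊗[k] Module.Dual k N :=
  (TensorProduct.dualDistribEquiv k B N).symm.toLinearMap.comp (lAct k).dualMap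

/-- `δ⁺ ⊗ id`, reassociated. -/
def cotensorMapL : (Module.Dual k M ⊗[k] Module.Dual k N) →ₗ[k]
    (Module.Dual k M ⊗[k] (Module.Dual k B ⊗[k] Module.Dual k N)) :=
  ((TensorProduct.assoc k (Module.Dual k M) (Module.Dual k B)
      (Module.Dual k N)).toLinearMap.comp
    (TensorProduct.map (coactR k (B := B) (M := M)) (LinearMap.id (M := Module.Dual k N))))

/-- `id ⊗ δ⁻`. -/
def cotensorMapR : (Module.Dual k M ⊗[k] Module.Dual k N) →ₗ[k]
    (Module.Dual k M ⊗[k] (Module.Dual k B ⊗[k] Module.Dual k N)) :=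
  TensorProduct.map (LinearMap.id (M := Module.Dual k M)) (coactL k (B := B) (N := N))

/-- The cotensor product `M* ⊠_{B*} N*`:  the kernel of `δ⁺⊗id - id⊗δ⁻`, i.e. the
equalizer of `δ⁺⊗id` and `id⊗δ⁻`. -/
def cotensor : Submodule k (Module.Dual k M ⊗[k] Module.Dual k N) :=
  LinearMap.eqLocus (cotensorMapL k (B := B) (M := M) (N := N))
    (cotensorMapR k (B := B) (M := M) (N := N))

/-- The submodule of `M ⊗[k] N` spanned by the balancing relations `m·b ⊗ n - m ⊗ b·n`. -/
def midRel : Submodule k (M ⊗[k] N) :=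
  Submodule.span k
    {z : M ⊗[k] N | ∃ (b : B) (m : M) (n : N), z = (op b • m) ⊗ₜ[k] n - m ⊗ₜ[k] (b • n)}

/-- The balanced tensor product `M ⊗_B N`. -/
def tensorOver := (M ⊗[k] N) ⧸ (midRel k (B := B) (M := M) (N := N))

instance : AddCommGroup (tensorOver k (B := B) (M := M) (N := N)) :=
  inferInstanceAs (AddCommGroup ((M ⊗[k] N) ⧸ (midRel k (B := B) (M := M) (N := N))))
instance : Module k (tensorOver k (B := B) (M := M) (N := N)) :=
  inferInstanceAs (Module k ((M ⊗[k] N) ⧸ (midRel k (B := B) (M := M) (N := N))))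

/-!
Under the perfect pairing `M* ⊗ N* ≅ (M ⊗ N)*`, and its three-fold analogue for
`M ⊗ B ⊗ N`, the equation `(δ⁺ ⊗ id) w = (id ⊗ δ⁻) w` tested on `m ⊗ b ⊗ n` reads
`⟨w, m·b ⊗ n⟩ = ⟨w, m ⊗ b·n⟩`. So the cotensor product is exactly the annihilator of the
balancing relations, which is `(M ⊗_B N)*`. The `A`- and `C`-actions commute with the
`B`-actions, so their transposes preserve the cotensor product, and the pairing
intertwines them with the actions on `M ⊗ N`.
-/

theorem dualDistrib_map_dualMap {X Y X' Y' : Type*} [AddCommGroup X] [Module k X]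
    [AddCommGroup Y] [Module k Y] [AddCommGroup X'] [Module k X'] [AddCommGroup Y'] [Module k Y']
    (f : X' →ₗ[k] X) (g : Y' →ₗ[k] Y) (u : Module.Dual k X ⊗[k] Module.Dual k Y) (z : X' ⊗[k] Y') :
    dualDistrib k X' Y' (map f.dualMap g.dualMap u) z = dualDistrib k X Y u (map f g z) := by
  induction u <;> induction z <;> simp_all

section Pairing

variable {X Y Z : Type*} [AddCommGroup X] [Module k X] [FiniteDimensional k X]
  [AddCommGroup Y] [Module k Y] [FiniteDimensional k Y]
  [AddCommGroup Z] [Module k Z] [FiniteDimensional k Z]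

theorem dualDistrib_dualDistribEquiv_symm (φ : Module.Dual k (X ⊗[k] Y)) :
    dualDistrib k X Y ((dualDistribEquiv k X Y).symm φ) = φ :=
  (dualDistribEquiv k X Y).apply_symm_apply φ

def dualDistribEquiv₃ :
    Module.Dual k X ⊗[k] (Module.Dual k Y ⊗[k] Module.Dual k Z) ≃ₗ[k]
      Module.Dual k (X ⊗[k] (Y ⊗[k] Z)) :=
  congr (LinearEquiv.refl k _) (dualDistribEquiv k Y Z) ≪≫ₗ dualDistribEquiv k X (Y ⊗[k] Z)

theorem dualDistribEquiv₃_tmul_apply (f : Module.Dual k X)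
    (v : Module.Dual k Y ⊗[k] Module.Dual k Z) (x : X) (y : Y) (z : Z) :
    dualDistribEquiv₃ k (f ⊗ₜ v) (x ⊗ₜ (y ⊗ₜ z)) = f x * dualDistrib k Y Z v (y ⊗ₜ z) :=
  rfl

theorem dualDistribEquiv₃_assoc_apply (u : Module.Dual k X ⊗[k] Module.Dual k Y)
    (g : Module.Dual k Z) (x : X) (y : Y) (z : Z) :
    dualDistribEquiv₃ k (TensorProduct.assoc k _ _ _ (u ⊗ₜ g)) (x ⊗ₜ (y ⊗ₜ z))
      = dualDistrib k X Y u (x ⊗ₜ y) * g z := by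
  induction u with
  | zero => simp
  | tmul f β => simp [dualDistribEquiv₃_tmul_apply, mul_assoc]
  | add u v hu hv => simp only [add_tmul, map_add, LinearMap.add_apply, hu, hv, add_mul]

end Pairing

theorem dualDistrib_coactR (f : Module.Dual k M) (m : M) (b : B) :
    dualDistrib k M B (coactR k f) (m ⊗ₜ b) = f (op b • m) := by
  rw [coactR, LinearMap.comp_apply, LinearEquiv.coe_coe, dualDistrib_dualDistribEquiv_symm]
  simp [rAct, act]

theorem dualDistrib_coactL (g : Module.Dual k N) (b : B) (n : N) :
    dualDistrib k B N (coactL k g) (b ⊗ₜ n) = g (b • n) := by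
  rw [coactL, LinearMap.comp_apply, LinearEquiv.coe_coe, dualDistrib_dualDistribEquiv_symm]
  simp [lAct, act]

theorem dualDistribEquiv₃_cotensorMapL {Z : Type*} [AddCommGroup Z] [Module k Z]
    [FiniteDimensional k Z] (w : Module.Dual k M ⊗[k] Module.Dual k Z) (m : M) (b : B) (z : Z) :
    dualDistribEquiv₃ k (cotensorMapL k w) (m ⊗ₜ (b ⊗ₜ z))
      = dualDistrib k M Z w ((op b • m) ⊗ₜ z) := by
  induction w with
  | zero => simp
  | tmul f g => simp [cotensorMapL, dualDistribEquiv₃_assoc_apply, dualDistrib_coactR]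
  | add u v hu hv => simp only [map_add, LinearMap.add_apply, hu, hv]

theorem dualDistribEquiv₃_cotensorMapR {X : Type*} [AddCommGroup X] [Module k X]
    [FiniteDimensional k X] (w : Module.Dual k X ⊗[k] Module.Dual k N) (x : X) (b : B) (n : N) :
    dualDistribEquiv₃ k (cotensorMapR k (B := B) w) (x ⊗ₜ (b ⊗ₜ n))
      = dualDistrib k X N w (x ⊗ₜ (b • n)) := by
  induction w with
  | zero => simp
  | tmul f g => simp [cotensorMapR, dualDistribEquiv₃_tmul_apply, dualDistrib_coactL]
  | add u v hu hv => simp only [map_add, LinearMap.add_apply, hu, hv]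

theorem mem_cotensor_iff (w : Module.Dual k M ⊗[k] Module.Dual k N) :
    w ∈ cotensor k (B := B) ↔ ∀ (b : B) (m : M) (n : N),
      dualDistrib k M N w ((op b • m) ⊗ₜ n) = dualDistrib k M N w (m ⊗ₜ (b • n)) := by
  rw [cotensor, LinearMap.mem_eqLocus, ← (dualDistribEquiv₃ k).injective.eq_iff]
  constructor
  · intro h b m n
    rw [← dualDistribEquiv₃_cotensorMapL, ← dualDistribEquiv₃_cotensorMapR, h]
  · intro h
    refine ext_threefold' fun m b n => ?_
    rw [dualDistribEquiv₃_cotensorMapL, dualDistribEquiv₃_cotensorMapR, h]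

theorem mem_cotensor_iff_mem_dualAnnihilator (w : Module.Dual k M ⊗[k] Module.Dual k N) :
    w ∈ cotensor k (B := B) ↔ dualDistrib k M N w ∈ (midRel k (B := B)).dualAnnihilator := by
  rw [mem_cotensor_iff, ← SetLike.mem_coe, midRel, Submodule.coe_dualAnnihilator_span]
  simp only [Set.mem_ofPred_eq, Set.subset_def, SetLike.mem_coe, LinearMap.mem_ker]
  constructor
  · rintro h _ ⟨b, m, n, rfl⟩
    rw [map_sub, h, sub_self]
  · intro h b m n
    simpa [sub_eq_zero] using h _ ⟨b, m, n, rfl⟩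

theorem map_cotensor_dualDistribEquiv :
    (cotensor k (B := B) (M := M) (N := N)).map (dualDistribEquiv k M N).toLinearMap
      = (midRel k (B := B)).dualAnnihilator := by
  ext φ
  rw [Submodule.mem_map_equiv, mem_cotensor_iff_mem_dualAnnihilator,
    dualDistrib_dualDistribEquiv_symm]

def cotensorDualEquiv : cotensor k (B := B) (M := M) (N := N) ≃ₗ[k]
    Module.Dual k (tensorOver k (B := B) (M := M) (N := N)) :=
  (dualDistribEquiv k M N).ofSubmodules _ _ (map_cotensor_dualDistribEquiv k) ≪≫ₗ
    (midRel k).dualQuotEquivDualAnnihilator.symm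

theorem cotensorDualEquiv_apply_mk (w : cotensor k (B := B) (M := M) (N := N)) (z : M ⊗[k] N) :
    cotensorDualEquiv k w (Submodule.Quotient.mk z) = dualDistrib k M N w z :=
  Submodule.dualQuotEquivDualAnnihilator_symm_apply_mk _ _ z

theorem map_dualMap_mem_cotensor {f : M →ₗ[k] M} {g : N →ₗ[k] N}
    (hf : ∀ (b : B) m, f (op b • m) = op b • f m)
    (hg : ∀ (b : B) n, g (b • n) = b • g n)
    {w : Module.Dual k M ⊗[k] Module.Dual k N} (hw : w ∈ cotensor k (B := B)) :
    map f.dualMap g.dualMap w ∈ cotensor k (B := B) := by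
  rw [mem_cotensor_iff] at hw ⊢
  intro b m n
  simp only [dualDistrib_map_dualMap, map_tmul, hf, hg, hw]

/-- **Lemma 1.2 (iii).**  `M* ⊠_{B*} N* ≅ (M ⊗_B N)*` as `A*`-`C*`-bicomodules, via
`f ⊗ g ↦ f ⊗_{B*} g`. -/
theorem cotensor_dual_iso :
    ∃ Φ : ↥(cotensor k (B := B) (M := M) (N := N)) ≃ₗ[k]
        Module.Dual k (tensorOver k (B := B) (M := M) (N := N)),
      -- elements of the cotensor product vanish on the balancing relations …
      (∀ w : cotensor k (B := B) (M := M) (N := N), ∀ z ∈ midRel k (B := B) (M := M) (N := N),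
        TensorProduct.dualDistrib k M N w.1 z = 0) ∧
      -- … and `Φ` is the map `f ⊗ g ↦ f ⊗_{B*} g`:
      (∀ (w : cotensor k (B := B) (M := M) (N := N)) (z : M ⊗[k] N),
        Φ w (Submodule.Quotient.mk z) = TensorProduct.dualDistrib k M N w.1 z) ∧
      -- `Φ` is a morphism of `A*`-`C*`-bicomodules (expressed by duality against the
      -- `A`- and `C`-actions):
      (∀ (a : A) (c : C) (w : cotensor k (B := B) (M := M) (N := N)),
        ∃ w' : cotensor k (B := B) (M := M) (N := N),
          w'.1 = (TensorProduct.map ((act k A M a).dualMap)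
            ((act k Cᵐᵒᵖ N (op c)).dualMap)) w.1 ∧
          ∀ z : M ⊗[k] N,
            Φ w' (Submodule.Quotient.mk z)
              = Φ w (Submodule.Quotient.mk
                  ((TensorProduct.map (act k A M a) (act k Cᵐᵒᵖ N (op c))) z))) := by
  refine ⟨cotensorDualEquiv k, fun w => ?_, cotensorDualEquiv_apply_mk k, fun a c w => ?_⟩
  · exact (Submodule.mem_dualAnnihilator _).mp ((mem_cotensor_iff_mem_dualAnnihilator k _).mp w.2)
  · have hmem := map_dualMap_mem_cotensor k (f := act k A M a) (g := act k Cᵐᵒᵖ N (op c))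
      (fun b m => smul_comm a (op b) m) (fun b n => (smul_comm b (op c) n).symm) w.2
    refine ⟨⟨_, hmem⟩, rfl, fun z => ?_⟩
    rw [cotensorDualEquiv_apply_mk, cotensorDualEquiv_apply_mk, dualDistrib_map_dualMap]

end LQTPaper
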